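/- Assume the correlators satisfy the string equation and the genus-0 topological recursion relation (TRR0). Let M = (M_a^b)_{a,b∈A} be the A×A matrix over R with entries M_a^b = ∂u^b/∂t^a_0. Then M is congruent to the identity matrix modulo the ideal J generated by {t^a_k : a ∈ A, k ≥ 1} (in particular M is invertible over R), and for every c ∈ A and every integer n ≥ 1, Tr((∂M/∂t^c_n)·M^{−1}) = ∑_{a,b∈A} η^{ab} ⟨⟨τ_{n−1}(γ_c)γ_a γ_b⟩⟩_0 + ∑_{d,e∈A} ⟨⟨τ_{n−1}(γ_c)γ_d⟩⟩_0 · η^{de} · Tr((∂M/∂t^e_0)·M^{−1}), where ∂M/∂t denotes the matrix of entrywise partial derivatives. -/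

import Mathlib

open MvPowerSeries

/-- The coefficientwise partial derivative `∂/∂t_s` on multivariate formal power series. -/
noncomputable def pderivPS {σ : Type*} {K : Type*} [CommSemiring K] (s : σ)
    (f : MvPowerSeries σ K) : MvPowerSeries σ K :=
  fun d => (d s + 1) • MvPowerSeries.coeff (d + Finsupp.single s 1) f

/-- Membership in the (completed) ideal `J ⊆ K[[t^a_k]]` generated by the variables
`t^a_k` with `k ≥ 1`: a formal power series lies in `J` iff its coefficient at every
monomial involving only the variables `t^a_0` vanishes. -/
def memJ {K : Type*} [CommSemiring K] {A : Type*} (f : MvPowerSeries (A × ℕ) K) : Prop :=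
  ∀ d : (A × ℕ) →₀ ℕ, (∀ p ∈ d.support, p.2 = 0) → MvPowerSeries.coeff d f = 0

/-- The generating series `⟨⟨X⟩⟩` of a correlator `C` (a symmetric function of its
insertions, modelled as a function of a multiset of pairs `(a, k)`, the pair `(a, k)`
standing for `τ_k(γ_a)`). -/
noncomputable def gen {K : Type*} [CommRing K] [Algebra ℚ K] {A : Type*}
    (C : Multiset (A × ℕ) → K) (X : Multiset (A × ℕ)) : MvPowerSeries (A × ℕ) K :=
  fun d => (((∏ s ∈ d.support, (d s).factorial : ℕ) : ℚ))⁻¹ • C (X + Finsupp.toMultiset d)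

/-- `u^a = ⟨⟨P γ^a⟩⟩₀`, where `P = γ_{a₀}` and `γ^a = ∑_b η^{ab} γ_b`. -/
noncomputable def uSeries {K : Type*} [CommRing K] [Algebra ℚ K] {A : Type*} [Fintype A]
    (C0 : Multiset (A × ℕ) → K) (ηinv : A → A → K) (P : A) (a : A) :
    MvPowerSeries (A × ℕ) K :=
  ∑ b : A, ηinv a b • gen C0 {(P, 0), (b, 0)}

/-- The right hand side of the string equation: `∑_{i : k_i ≥ 1} ⟨⋯ τ_{k_i−1}(γ_{a_i}) ⋯⟩`. -/
def stringRHS {K : Type*} [CommRing K] {A : Type*} [DecidableEq A]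
    (C : Multiset (A × ℕ) → K) (X : Multiset (A × ℕ)) : K :=
  (X.map fun p => if 1 ≤ p.2 then C ((p.1, p.2 - 1) ::ₘ X.erase p) else 0).sum

/-- The string equation for the genus-0 correlators, with the exceptional case
`n = 2`, `k_1 = k_2 = 0` where the right-hand side is `η_{a₁a₂}`. -/
def StringEq0 {K : Type*} [CommRing K] {A : Type*} [DecidableEq A]
    (P : A) (η : A → A → K) (C0 : Multiset (A × ℕ) → K) : Prop :=
  (∀ a b : A, C0 {(P, 0), (a, 0), (b, 0)} = η a b) ∧
  ∀ X : Multiset (A × ℕ), (∀ a b : A, X ≠ {(a, 0), (b, 0)}) →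
    C0 ((P, 0) ::ₘ X) = stringRHS C0 X

/-- The string equation for the genus-1 correlators. -/
def StringEq1 {K : Type*} [CommRing K] {A : Type*} [DecidableEq A]
    (P : A) (C1 : Multiset (A × ℕ) → K) : Prop :=
  ∀ X : Multiset (A × ℕ), C1 ((P, 0) ::ₘ X) = stringRHS C1 X

/-- The genus-0 topological recursion relation (TRR0). -/
def TRR0 {K : Type*} [CommRing K] [Algebra ℚ K] {A : Type*} [Fintype A]
    (ηinv : A → A → K) (C0 : Multiset (A × ℕ) → K) : Prop :=
  ∀ (k1 k2 k3 : ℕ) (a1 a2 a3 : A), 1 ≤ k1 →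
    gen C0 {(a1, k1), (a2, k2), (a3, k3)} =
      ∑ a : A, ∑ b : A, ηinv a b •
        (gen C0 {(a1, k1 - 1), (a, 0)} * gen C0 {(b, 0), (a2, k2), (a3, k3)})

/-- The genus-1 topological recursion relation (TRR1). -/
def TRR1 {K : Type*} [CommRing K] [Algebra ℚ K] {A : Type*} [Fintype A]
    (ηinv : A → A → K) (C0 C1 : Multiset (A × ℕ) → K) : Prop :=
  ∀ (k : ℕ) (a0 : A), 1 ≤ k →
    gen C1 {(a0, k)} =
      (∑ a : A, ∑ b : A, ηinv a b • (gen C0 {(a0, k - 1), (a, 0)} * gen C1 {(b, 0)})) +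
      (1 / 24 : ℚ) • ∑ a : A, ∑ b : A, ηinv a b • gen C0 {(a0, k - 1), (a, 0), (b, 0)}

/-- The matrix `M_a^b = ∂u^b/∂t^a_0`. -/
noncomputable def Mmat {K : Type*} [CommRing K] [Algebra ℚ K] {A : Type*} [Fintype A]
    (C0 : Multiset (A × ℕ) → K) (ηinv : A → A → K) (P : A) :
    Matrix A A (MvPowerSeries (A × ℕ) K) :=
  Matrix.of fun a b => pderivPS (a, 0) (uSeries C0 ηinv P b)


section AuxLemmas

lemma coeff_pderivPS {σ K : Type*} [CommSemiring K] (s : σ) (f : MvPowerSeries σ K)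
    (d : σ →₀ ℕ) :
    MvPowerSeries.coeff d (pderivPS s f) =
      (d s + 1) • MvPowerSeries.coeff (d + Finsupp.single s 1) f := rfl

lemma pderivPS_smul {σ K : Type*} [CommSemiring K] (s : σ) (c : K) (f : MvPowerSeries σ K) :
    pderivPS s (c • f) = c • pderivPS s f := by
  ext d
  rw [coeff_pderivPS, map_smul, map_smul, coeff_pderivPS, smul_comm]

lemma pderivPS_sum {σ K ι : Type*} [CommSemiring K] (s : σ) (t : Finset ι)
    (F : ι → MvPowerSeries σ K) :
    pderivPS s (∑ i ∈ t, F i) = ∑ i ∈ t, pderivPS s (F i) := by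
  ext d
  rw [coeff_pderivPS, map_sum, map_sum, Finset.smul_sum]
  exact Finset.sum_congr rfl fun i _ => rfl

lemma sum_antidiag_fst {σ M : Type*} [DecidableEq σ] [AddCommMonoid M] (s : σ) (d : σ →₀ ℕ)
    (F : (σ →₀ ℕ) → (σ →₀ ℕ) → M) :
    ∑ p ∈ Finset.HasAntidiagonal.antidiagonal (d + Finsupp.single s 1), (p.1 : σ →₀ ℕ) s • F p.1 p.2
      = ∑ p ∈ Finset.HasAntidiagonal.antidiagonal d, ((p.1 : σ →₀ ℕ) s + 1) • F (p.1 + Finsupp.single s 1) p.2 := by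
  rw [← Finset.sum_filter_of_ne (p := fun p => p.1 s ≠ 0)
    (by intro p _ h hc; exact h (by rw [hc, zero_smul]))]
  refine Finset.sum_nbij' (fun p => (p.1 - Finsupp.single s 1, p.2))
    (fun q => (q.1 + Finsupp.single s 1, q.2)) ?_ ?_ ?_ ?_ ?_
  · intro p hp
    simp only [Finset.mem_filter, Finset.HasAntidiagonal.mem_antidiagonal] at hp ⊢
    have hle : Finsupp.single s 1 ≤ p.1 := Finsupp.single_le_iff.2 (Nat.one_le_iff_ne_zero.2 hp.2)
    rw [tsub_add_eq_add_tsub hle, hp.1, add_tsub_cancel_right]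
  · intro q hq
    simp only [Finset.mem_filter, Finset.HasAntidiagonal.mem_antidiagonal] at hq ⊢
    constructor
    · rw [add_right_comm, hq]
    · simp [Finsupp.add_apply]
  · intro p hp
    simp only [Finset.mem_filter, Finset.HasAntidiagonal.mem_antidiagonal] at hp
    have hle : Finsupp.single s 1 ≤ p.1 := Finsupp.single_le_iff.2 (Nat.one_le_iff_ne_zero.2 hp.2)
    simp [tsub_add_cancel_of_le hle]
  · intro q _
    simp
  · intro p hp
    simp only [Finset.mem_filter, Finset.HasAntidiagonal.mem_antidiagonal] at hp
    have hle : Finsupp.single s 1 ≤ p.1 := Finsupp.single_le_iff.2 (Nat.one_le_iff_ne_zero.2 hp.2)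
    have h1 : ((p.1 - Finsupp.single s 1 : _ →₀ _)) s = p.1 s - 1 := by
      rw [Finsupp.tsub_apply, Finsupp.single_eq_same]
    rw [tsub_add_cancel_of_le hle, h1, Nat.sub_add_cancel (Nat.one_le_iff_ne_zero.2 hp.2)]

lemma sum_antidiag_snd {σ M : Type*} [DecidableEq σ] [AddCommMonoid M] (s : σ) (d : σ →₀ ℕ)
    (F : (σ →₀ ℕ) → (σ →₀ ℕ) → M) :
    ∑ p ∈ Finset.HasAntidiagonal.antidiagonal (d + Finsupp.single s 1), (p.2 : σ →₀ ℕ) s • F p.1 p.2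
      = ∑ p ∈ Finset.HasAntidiagonal.antidiagonal d, ((p.2 : σ →₀ ℕ) s + 1) • F p.1 (p.2 + Finsupp.single s 1) := by
  rw [← Finset.sum_filter_of_ne (p := fun p => p.2 s ≠ 0)
    (by intro p _ h hc; exact h (by rw [hc, zero_smul]))]
  refine Finset.sum_nbij' (fun p => (p.1, p.2 - Finsupp.single s 1))
    (fun q => (q.1, q.2 + Finsupp.single s 1)) ?_ ?_ ?_ ?_ ?_
  · intro p hp
    simp only [Finset.mem_filter, Finset.HasAntidiagonal.mem_antidiagonal] at hp ⊢
    have hle : Finsupp.single s 1 ≤ p.2 := Finsupp.single_le_iff.2 (Nat.one_le_iff_ne_zero.2 hp.2)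
    rw [← add_tsub_assoc_of_le hle, hp.1, add_tsub_cancel_right]
  · intro q hq
    simp only [Finset.mem_filter, Finset.HasAntidiagonal.mem_antidiagonal] at hq ⊢
    constructor
    · rw [← add_assoc, hq]
    · simp [Finsupp.add_apply]
  · intro p hp
    simp only [Finset.mem_filter, Finset.HasAntidiagonal.mem_antidiagonal] at hp
    have hle : Finsupp.single s 1 ≤ p.2 := Finsupp.single_le_iff.2 (Nat.one_le_iff_ne_zero.2 hp.2)
    simp [tsub_add_cancel_of_le hle]
  · intro q _
    simp
  · intro p hp
    simp only [Finset.mem_filter, Finset.HasAntidiagonal.mem_antidiagonal] at hp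
    have hle : Finsupp.single s 1 ≤ p.2 := Finsupp.single_le_iff.2 (Nat.one_le_iff_ne_zero.2 hp.2)
    have h1 : ((p.2 - Finsupp.single s 1 : _ →₀ _)) s = p.2 s - 1 := by
      rw [Finsupp.tsub_apply, Finsupp.single_eq_same]
    rw [tsub_add_cancel_of_le hle, h1, Nat.sub_add_cancel (Nat.one_le_iff_ne_zero.2 hp.2)]

lemma pderivPS_mul {σ K : Type*} [DecidableEq σ] [CommSemiring K] (s : σ)
    (f g : MvPowerSeries σ K) :
    pderivPS s (f * g) = pderivPS s f * g + f * pderivPS s g := by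
  ext d
  rw [map_add, coeff_pderivPS, MvPowerSeries.coeff_mul, MvPowerSeries.coeff_mul,
    MvPowerSeries.coeff_mul, Finset.smul_sum]
  have h1 : ∀ p ∈ Finset.HasAntidiagonal.antidiagonal (d + Finsupp.single s 1),
      (d s + 1) • (MvPowerSeries.coeff p.1 f * MvPowerSeries.coeff p.2 g)
        = (p.1 : σ →₀ ℕ) s • (MvPowerSeries.coeff p.1 f * MvPowerSeries.coeff p.2 g)
          + (p.2 : σ →₀ ℕ) s • (MvPowerSeries.coeff p.1 f * MvPowerSeries.coeff p.2 g) := by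
    intro p hp
    rw [Finset.HasAntidiagonal.mem_antidiagonal] at hp
    have : p.1 s + p.2 s = d s + 1 := by
      have := congrArg (fun m : σ →₀ ℕ => m s) hp
      simpa [Finsupp.add_apply, Finsupp.single_eq_same] using this
    rw [← this, add_smul]
  rw [Finset.sum_congr rfl h1, Finset.sum_add_distrib,
    sum_antidiag_fst s d (fun x y => MvPowerSeries.coeff x f * MvPowerSeries.coeff y g),
    sum_antidiag_snd s d (fun x y => MvPowerSeries.coeff x f * MvPowerSeries.coeff y g)]
  congr 1
  · exact Finset.sum_congr rfl fun p _ => by rw [coeff_pderivPS, smul_mul_assoc]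
  · exact Finset.sum_congr rfl fun p _ => by rw [coeff_pderivPS, mul_smul_comm]

lemma coeff_gen {K : Type*} [CommRing K] [Algebra ℚ K] {A : Type*}
    (C : Multiset (A × ℕ) → K) (X : Multiset (A × ℕ)) (d : (A × ℕ) →₀ ℕ) :
    MvPowerSeries.coeff d (gen C X)
      = (((∏ s ∈ d.support, (d s).factorial : ℕ) : ℚ))⁻¹ • C (X + Finsupp.toMultiset d) := rfl

lemma prod_factorial_add_single {σ : Type*} [DecidableEq σ] (s : σ) (d : σ →₀ ℕ) :
    ∏ p ∈ (d + Finsupp.single s 1).support, ((d + Finsupp.single s 1 : σ →₀ ℕ) p).factorial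
      = (d s + 1) * ∏ p ∈ d.support, (d p).factorial := by
  have hsupp : (d + Finsupp.single s 1).support = insert s d.support := by
    ext p
    simp only [Finsupp.mem_support_iff, Finset.mem_insert, Finsupp.add_apply,
      Finsupp.single_apply]
    by_cases h : p = s
    · subst h; simp
    · simp [h, Ne.symm h]
  rw [hsupp, ← Finset.mul_prod_erase _ _ (Finset.mem_insert_self s d.support),
    Finset.erase_insert_eq_erase]
  have h2 : ∀ p ∈ d.support.erase s,
      ((d + Finsupp.single s 1 : σ →₀ ℕ) p).factorial = (d p).factorial := by
    intro p hp
    have hps : p ≠ s := Finset.ne_of_mem_erase hp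
    simp [Finsupp.add_apply, Finsupp.single_apply, Ne.symm hps]
  rw [Finset.prod_congr rfl h2]
  have hds : (d + Finsupp.single s 1 : σ →₀ ℕ) s = d s + 1 := by
    simp [Finsupp.add_apply, Finsupp.single_eq_same]
  rw [hds, Nat.factorial_succ, mul_assoc]
  by_cases hs : s ∈ d.support
  · rw [← Finset.mul_prod_erase _ _ hs]
  · have h0 : d s = 0 := Finsupp.notMem_support_iff.1 hs
    rw [Finset.erase_eq_of_notMem hs, h0]
    simp

lemma pderivPS_gen {K : Type*} [CommRing K] [Algebra ℚ K] {A : Type*} [DecidableEq A]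
    (C : Multiset (A × ℕ) → K) (X : Multiset (A × ℕ)) (s : A × ℕ) :
    pderivPS s (gen C X) = gen C (s ::ₘ X) := by
  ext d
  rw [coeff_pderivPS, coeff_gen, coeff_gen]
  have hm : X + Finsupp.toMultiset (d + Finsupp.single s 1)
      = (s ::ₘ X) + Finsupp.toMultiset d := by
    rw [Finsupp.toMultiset_add, Finsupp.toMultiset_single, one_nsmul,
      ← Multiset.singleton_add]
    abel
  rw [hm, prod_factorial_add_single, ← Nat.cast_smul_eq_nsmul ℚ, smul_smul]
  congr 1
  have h : ((d s : ℚ) + 1) ≠ 0 := by positivity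
  push_cast
  rw [mul_inv, ← mul_assoc, mul_inv_cancel₀ h, one_mul]

lemma quad_swap_pre {β ι : Type*} [AddCommMonoid β] [Fintype ι] (f : ι → ι → ι → β) :
    ∑ e : ι, ∑ x : ι, ∑ y : ι, f e x y = ∑ x : ι, ∑ y : ι, ∑ e : ι, f e x y := by
  rw [Finset.sum_comm]
  exact Finset.sum_congr rfl fun x _ => Finset.sum_comm

lemma quad_swap {β ι : Type*} [AddCommMonoid β] [Fintype ι] (f : ι → ι → ι → ι → β) :
    ∑ i : ι, ∑ j : ι, ∑ x : ι, ∑ y : ι, f i j x y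
      = ∑ x : ι, ∑ y : ι, ∑ i : ι, ∑ j : ι, f i j x y := by
  rw [Finset.sum_congr rfl fun i (_ : i ∈ Finset.univ) => quad_swap_pre (f i), Finset.sum_comm]
  exact Finset.sum_congr rfl fun x _ => Finset.sum_comm

lemma triple_swap {β ι : Type*} [AddCommMonoid β] [Fintype ι] (f : ι → ι → ι → β) :
    ∑ e : ι, ∑ x : ι, ∑ y : ι, f e x y = ∑ x : ι, ∑ y : ι, ∑ e : ι, f e x y := by
  rw [Finset.sum_comm]
  exact Finset.sum_congr rfl fun x _ => Finset.sum_comm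

end AuxLemmas

/-- Assuming the string equation and the genus-0 topological recursion relation, the
matrix `M = (∂u^b/∂t^a_0)` is congruent to the identity modulo `J` (in particular it is
invertible over `R`), and for every `c ∈ A` and `n ≥ 1`,
`Tr((∂M/∂t^c_n)·M⁻¹) = ∑_{a,b} η^{ab} ⟨⟨τ_{n−1}(γ_c)γ_a γ_b⟩⟩₀
  + ∑_{d,e} ⟨⟨τ_{n−1}(γ_c)γ_d⟩⟩₀ η^{de} Tr((∂M/∂t^e_0)·M⁻¹)`. -/
theorem trace_M_first_order_system
    {K : Type*} [CommRing K] [Algebra ℚ K] {A : Type*} [Fintype A] [DecidableEq A]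
    (P : A) (η ηinv : A → A → K)
    (hsymm : ∀ a b : A, η a b = η b a)
    (hinv : ∀ a b : A, ∑ c : A, η a c * ηinv c b = if a = b then 1 else 0)
    (hinv' : ∀ a b : A, ∑ c : A, ηinv a c * η c b = if a = b then 1 else 0)
    (C0 C1 : Multiset (A × ℕ) → K)
    (hs0 : StringEq0 P η C0) (hs1 : StringEq1 P C1)
    (htrr : TRR0 ηinv C0) :
    (∀ a b : A,
      memJ (Mmat C0 ηinv P a b -
        (1 : Matrix A A (MvPowerSeries (A × ℕ) K)) a b)) ∧
    (∃ Minv : Matrix A A (MvPowerSeries (A × ℕ) K),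
      Mmat C0 ηinv P * Minv = 1 ∧ Minv * Mmat C0 ηinv P = 1) ∧
    ∀ Minv : Matrix A A (MvPowerSeries (A × ℕ) K),
      Mmat C0 ηinv P * Minv = 1 → Minv * Mmat C0 ηinv P = 1 →
      ∀ (c : A) (n : ℕ), 1 ≤ n →
        Matrix.trace
            (Matrix.of (fun a b => pderivPS (c, n) (Mmat C0 ηinv P a b)) * Minv) =
          (∑ a : A, ∑ b : A, ηinv a b • gen C0 {(c, n - 1), (a, 0), (b, 0)}) +
          ∑ d : A, ∑ e : A, ηinv d e •
            (gen C0 {(c, n - 1), (d, 0)} *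
              Matrix.trace
                (Matrix.of (fun a b => pderivPS (e, 0) (Mmat C0 ηinv P a b)) * Minv)) := by
  classical
  have hMab : ∀ a b : A, Mmat C0 ηinv P a b
      = ∑ e : A, ηinv b e • gen C0 ((a, 0) ::ₘ {(P, 0), (e, 0)}) := by
    intro a b
    show pderivPS (a, 0) (uSeries C0 ηinv P b) = _
    rw [uSeries, pderivPS_sum]
    exact Finset.sum_congr rfl fun e _ => by rw [pderivPS_smul, pderivPS_gen]
  have hvanish : ∀ Y : Multiset (A × ℕ), (∀ p ∈ Y, p.2 = 0) → 3 ≤ Multiset.card Y →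
      C0 ((P, 0) ::ₘ Y) = 0 := by
    intro Y hY hcard
    have hne : ∀ x y : A, Y ≠ {(x, 0), (y, 0)} := by
      intro x y h
      rw [h] at hcard
      simp at hcard
    rw [hs0.2 Y hne, stringRHS]
    apply Multiset.sum_eq_zero
    intro z hz
    rw [Multiset.mem_map] at hz
    obtain ⟨p, hp, rfl⟩ := hz
    rw [hY p hp]
    simp
  -- the key coefficient computation for monomials involving only level-0 variables
  have hcoeff : ∀ (a b : A) (d : (A × ℕ) →₀ ℕ), (∀ p ∈ d.support, p.2 = 0) →
      MvPowerSeries.coeff d (Mmat C0 ηinv P a b)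
        = MvPowerSeries.coeff d ((1 : Matrix A A (MvPowerSeries (A × ℕ) K)) a b) := by
    intro a b d hd
    rw [hMab, map_sum]
    by_cases h0 : d = 0
    · subst h0
      have hone : MvPowerSeries.coeff (0 : (A × ℕ) →₀ ℕ)
          ((1 : Matrix A A (MvPowerSeries (A × ℕ) K)) a b) = if a = b then 1 else 0 := by
        rw [Matrix.one_apply]
        by_cases h : a = b <;> simp [h]
      rw [hone]
      have hterm : ∀ e : A, MvPowerSeries.coeff (0 : (A × ℕ) →₀ ℕ)
          (ηinv b e • gen C0 ((a, 0) ::ₘ {(P, 0), (e, 0)})) = ηinv b e * η e a := by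
        intro e
        rw [map_smul, coeff_gen, smul_eq_mul]
        have hX : ((a, 0) ::ₘ {(P, 0), (e, 0)} : Multiset (A × ℕ))
            + Finsupp.toMultiset (0 : (A × ℕ) →₀ ℕ) = {(P, 0), (a, 0), (e, 0)} := by
          rw [map_zero, add_zero]
          simp only [Multiset.insert_eq_cons]
          rw [Multiset.cons_swap]
        rw [hX, hs0.1 a e, hsymm a e]
        simp
      rw [Finset.sum_congr rfl fun e _ => hterm e, hinv' b a]
      simp [eq_comm]
    · have hone : MvPowerSeries.coeff d
          ((1 : Matrix A A (MvPowerSeries (A × ℕ) K)) a b) = 0 := by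
        rw [Matrix.one_apply]
        by_cases h : a = b <;> simp [h, MvPowerSeries.coeff_one, h0]
      rw [hone]
      apply Finset.sum_eq_zero
      intro e _
      rw [map_smul, coeff_gen, smul_eq_mul]
      have hX : ((a, 0) ::ₘ {(P, 0), (e, 0)} : Multiset (A × ℕ)) + Finsupp.toMultiset d
          = (P, 0) ::ₘ (((a, 0) ::ₘ {(e, 0)}) + Finsupp.toMultiset d) := by
        simp only [Multiset.insert_eq_cons]
        rw [Multiset.cons_swap, Multiset.cons_add]
      rw [hX, hvanish]
      · simp
      · intro p hp
        rw [Multiset.mem_add] at hp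
        rcases hp with hp | hp
        · rcases Multiset.mem_cons.1 hp with rfl | hp
          · rfl
          · rw [Multiset.mem_singleton] at hp; rw [hp]
        · exact hd p ((Finsupp.mem_toMultiset d p).1 hp)
      · rw [Multiset.card_add]
        have : Finsupp.toMultiset d ≠ 0 := by
          obtain ⟨p, hp⟩ := Finsupp.support_nonempty_iff.2 h0
          intro hc
          have := (Finsupp.mem_toMultiset d p).2 hp
          rw [hc] at this
          exact Multiset.notMem_zero p this
        have h1 : 1 ≤ Multiset.card (Finsupp.toMultiset d) :=
          Multiset.card_pos.2 this
        simp only [Multiset.card_cons, Multiset.card_singleton]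
        omega
  have hmemJ : ∀ a b : A, memJ (Mmat C0 ηinv P a b -
      (1 : Matrix A A (MvPowerSeries (A × ℕ) K)) a b) := by
    intro a b d hd
    rw [map_sub, hcoeff a b d hd, sub_self]
  refine ⟨hmemJ, ?_, ?_⟩
  · -- invertibility
    have hconst : (Mmat C0 ηinv P).map (MvPowerSeries.constantCoeff (σ := A × ℕ) (R := K)) = 1 := by
      ext a b
      have := hcoeff a b 0 (by simp)
      rw [MvPowerSeries.coeff_zero_eq_constantCoeff] at this
      rw [Matrix.map_apply, this, Matrix.one_apply, Matrix.one_apply]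
      by_cases h : a = b <;> simp [h]
    have hdet : IsUnit (Mmat C0 ηinv P).det := by
      rw [MvPowerSeries.isUnit_iff_constantCoeff]
      have : (MvPowerSeries.constantCoeff (σ := A × ℕ) (R := K)) (Mmat C0 ηinv P).det
          = ((Mmat C0 ηinv P).map (MvPowerSeries.constantCoeff (σ := A × ℕ) (R := K))).det := by
        rw [RingHom.map_det]
        rfl
      rw [this, hconst, Matrix.det_one]
      exact isUnit_one
    have hU : IsUnit (Mmat C0 ηinv P) := (Matrix.isUnit_iff_isUnit_det _).2 hdet
    obtain ⟨u, hu⟩ := hU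
    exact ⟨↑u⁻¹, by rw [← hu]; exact u.mul_inv, by rw [← hu]; exact u.inv_mul⟩
  · intro Minv hM1 hM2 c n hn
    have hMder : ∀ (s : A × ℕ) (a b : A), pderivPS s (Mmat C0 ηinv P a b)
        = ∑ e : A, ηinv b e • gen C0 (s ::ₘ (a, 0) ::ₘ {(P, 0), (e, 0)}) := by
      intro s a b
      rw [hMab, pderivPS_sum]
      exact Finset.sum_congr rfl fun e _ => by rw [pderivPS_smul, pderivPS_gen]
    have hterm : ∀ a e : A, gen C0 ((c, n) ::ₘ (a, 0) ::ₘ {(P, 0), (e, 0)})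
        = ∑ x : A, ∑ y : A, ηinv x y •
            (gen C0 {(c, n - 1), (x, 0), (a, 0)} * gen C0 ((y, 0) ::ₘ {(P, 0), (e, 0)})
              + gen C0 {(c, n - 1), (x, 0)} *
                  gen C0 ((y, 0) ::ₘ (a, 0) ::ₘ {(P, 0), (e, 0)})) := by
      intro a e
      rw [Multiset.cons_swap]
      have h2 : ((c, n) ::ₘ {(P, 0), (e, 0)} : Multiset (A × ℕ))
          = {(c, n), (P, 0), (e, 0)} := rfl
      rw [h2, ← pderivPS_gen, htrr n 0 0 c P e hn, pderivPS_sum]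
      refine Finset.sum_congr rfl fun x _ => ?_
      rw [pderivPS_sum]
      refine Finset.sum_congr rfl fun y _ => ?_
      rw [pderivPS_smul, pderivPS_mul, pderivPS_gen, pderivPS_gen]
      have m1 : ((a, 0) ::ₘ {(c, n - 1), (x, 0)} : Multiset (A × ℕ))
          = {(c, n - 1), (x, 0), (a, 0)} := by
        show ((a, 0) ::ₘ (c, n - 1) ::ₘ (x, 0) ::ₘ 0 : Multiset (A × ℕ))
          = (c, n - 1) ::ₘ (x, 0) ::ₘ (a, 0) ::ₘ 0
        rw [Multiset.cons_swap, Multiset.cons_swap ((a, 0) : A × ℕ) ((x, 0) : A × ℕ)]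
      have m2 : ((a, 0) ::ₘ {(y, 0), (P, 0), (e, 0)} : Multiset (A × ℕ))
          = (y, 0) ::ₘ (a, 0) ::ₘ {(P, 0), (e, 0)} := Multiset.cons_swap _ _ _
      rw [m1, m2]
      rfl
    have hkey : ∀ a b : A, pderivPS (c, n) (Mmat C0 ηinv P a b)
        = (∑ x : A, ∑ y : A, ηinv x y •
            (gen C0 {(c, n - 1), (x, 0), (a, 0)} * Mmat C0 ηinv P y b))
          + ∑ x : A, ∑ y : A, ηinv x y •
            (gen C0 {(c, n - 1), (x, 0)} * pderivPS ((y, 0) : A × ℕ) (Mmat C0 ηinv P a b)) := by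
      intro a b
      calc pderivPS ((c, n) : A × ℕ) (Mmat C0 ηinv P a b)
          = ∑ e : A, ηinv b e • gen C0 ((c, n) ::ₘ (a, 0) ::ₘ {(P, 0), (e, 0)}) :=
            hMder _ a b
        _ = ∑ e : A, ∑ x : A, ∑ y : A,
              (ηinv x y • (gen C0 {(c, n - 1), (x, 0), (a, 0)} *
                  (ηinv b e • gen C0 ((y, 0) ::ₘ {(P, 0), (e, 0)})))
                + ηinv x y • (gen C0 {(c, n - 1), (x, 0)} *
                  (ηinv b e • gen C0 ((y, 0) ::ₘ (a, 0) ::ₘ {(P, 0), (e, 0)})))) := by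
            refine Finset.sum_congr rfl fun e _ => ?_
            rw [hterm a e, Finset.smul_sum]
            refine Finset.sum_congr rfl fun x _ => ?_
            rw [Finset.smul_sum]
            refine Finset.sum_congr rfl fun y _ => ?_
            rw [smul_comm (ηinv b e) (ηinv x y), smul_add, ← mul_smul_comm, ← mul_smul_comm,
              smul_add]
        _ = ∑ x : A, ∑ y : A, ∑ e : A,
              (ηinv x y • (gen C0 {(c, n - 1), (x, 0), (a, 0)} *
                  (ηinv b e • gen C0 ((y, 0) ::ₘ {(P, 0), (e, 0)})))
                + ηinv x y • (gen C0 {(c, n - 1), (x, 0)} *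
                  (ηinv b e • gen C0 ((y, 0) ::ₘ (a, 0) ::ₘ {(P, 0), (e, 0)})))) :=
            triple_swap _
        _ = _ := by
            simp only [Finset.sum_add_distrib]
            congr 1
            · refine Finset.sum_congr rfl fun x _ => Finset.sum_congr rfl fun y _ => ?_
              rw [← Finset.smul_sum, ← Finset.mul_sum, ← hMab y b]
            · refine Finset.sum_congr rfl fun x _ => Finset.sum_congr rfl fun y _ => ?_
              rw [← Finset.smul_sum, ← Finset.mul_sum, ← hMder ((y, 0) : A × ℕ) a b]
    have htr : ∀ N : A → A → MvPowerSeries (A × ℕ) K,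
        Matrix.trace (Matrix.of N * Minv) = ∑ i : A, ∑ j : A, N i j * Minv j i := by
      intro N
      rw [Matrix.trace]
      exact Finset.sum_congr rfl fun i _ => by
        rw [Matrix.diag_apply, Matrix.mul_apply]
        rfl
    have hMul1 : ∀ y i : A, (∑ j : A, Mmat C0 ηinv P y j * Minv j i)
        = if y = i then 1 else 0 := by
      intro y i
      have h := Matrix.ext_iff.mpr hM1 y i
      rw [Matrix.mul_apply] at h
      rw [h, Matrix.one_apply]
    rw [htr]
    calc ∑ i : A, ∑ j : A, pderivPS ((c, n) : A × ℕ) (Mmat C0 ηinv P i j) * Minv j i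
        = ∑ i : A, ∑ j : A,
            ((∑ x : A, ∑ y : A, ηinv x y •
                (gen C0 {(c, n - 1), (x, 0), (i, 0)} * Mmat C0 ηinv P y j)) * Minv j i
              + (∑ x : A, ∑ y : A, ηinv x y •
                (gen C0 {(c, n - 1), (x, 0)} *
                  pderivPS ((y, 0) : A × ℕ) (Mmat C0 ηinv P i j))) * Minv j i) := by
          refine Finset.sum_congr rfl fun i _ => Finset.sum_congr rfl fun j _ => ?_
          rw [hkey i j, add_mul]
      _ = (∑ i : A, ∑ j : A, ∑ x : A, ∑ y : A,
            (ηinv x y • (gen C0 {(c, n - 1), (x, 0), (i, 0)} * Mmat C0 ηinv P y j)) * Minv j i)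
          + ∑ i : A, ∑ j : A, ∑ x : A, ∑ y : A,
            (ηinv x y • (gen C0 {(c, n - 1), (x, 0)} *
              pderivPS ((y, 0) : A × ℕ) (Mmat C0 ηinv P i j))) * Minv j i := by
          simp only [Finset.sum_mul, Finset.sum_add_distrib]
      _ = _ := by
          congr 1
          · rw [quad_swap]
            refine Finset.sum_congr rfl fun x _ => Finset.sum_congr rfl fun y _ => ?_
            have hstep : ∀ i : A, ∑ j : A,
                (ηinv x y • (gen C0 {(c, n - 1), (x, 0), (i, 0)} * Mmat C0 ηinv P y j)) * Minv j i
                  = ηinv x y • (gen C0 {(c, n - 1), (x, 0), (i, 0)} *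
                      (if y = i then 1 else 0)) := by
              intro i
              rw [← hMul1 y i, Finset.mul_sum, Finset.smul_sum]
              exact Finset.sum_congr rfl fun j _ => by rw [smul_mul_assoc, mul_assoc]
            trans ∑ i : A, ηinv x y • (gen C0 {(c, n - 1), (x, 0), (i, 0)} *
                (if y = i then 1 else 0))
            · exact Finset.sum_congr rfl fun i _ => hstep i
            · rw [← Finset.smul_sum]
              congr 1
              simp only [mul_ite, mul_one, mul_zero]
              exact Fintype.sum_ite_eq y _
          · rw [quad_swap]
            refine Finset.sum_congr rfl fun x _ => Finset.sum_congr rfl fun y _ => ?_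
            have hstep : ∀ i : A, ∑ j : A,
                (ηinv x y • (gen C0 {(c, n - 1), (x, 0)} *
                    pderivPS ((y, 0) : A × ℕ) (Mmat C0 ηinv P i j))) * Minv j i
                  = ηinv x y • (gen C0 {(c, n - 1), (x, 0)} *
                      ∑ j : A, pderivPS ((y, 0) : A × ℕ) (Mmat C0 ηinv P i j) * Minv j i) := by
              intro i
              rw [Finset.mul_sum, Finset.smul_sum]
              exact Finset.sum_congr rfl fun j _ => by rw [smul_mul_assoc, mul_assoc]
            trans ∑ i : A, ηinv x y • (gen C0 {(c, n - 1), (x, 0)} *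
                ∑ j : A, pderivPS ((y, 0) : A × ℕ) (Mmat C0 ηinv P i j) * Minv j i)
            · exact Finset.sum_congr rfl fun i _ => hstep i
            · rw [← Finset.smul_sum, ← Finset.mul_sum, htr]
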